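/- arXiv:2103.02643 — 3 statements merged into one kernel-verified Lean document; each statement's English description precedes it below -/
import Mathlib

section
/- Tower-rule equivalence of nested conditional means (Lemma 1 of the paper, discrete case): if the sampling indicator R is conditionally independent of S given (W, A, C, CY), then E[ E[ f(W,S) | W, A, C, CY ] | A = a₂, W ] = E[ E[ f(W,S) | R = 1, W, A, C, CY ] | A = a₂, W ] almost surely, for any bounded measurable function f. In particular, with f(W,S) = E[Y | A = a₁, W, S], the quantity Q̄_{Q̄_Y(W,S)}(W) = E[Q̄_Y(W,S) | A = a₂, W] equals Q̃_{Q̃(W,A,C,CY)}(W) = E[ E[Q̄_Y(W,S) | R = 1, W, A, C, CY] | A = a₂, W]. -/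
open scoped Classical BigOperators

/-- Probability of an event under a mass function `p` on a finite space. -/
noncomputable def Pr {Ω : Type*} [Fintype Ω] (p : Ω → ℝ) (E : Ω → Prop) : ℝ :=
  ∑ ω, if E ω then p ω else 0

/-- Expectation. -/
noncomputable def Ex {Ω : Type*} [Fintype Ω] (p : Ω → ℝ) (X : Ω → ℝ) : ℝ :=
  ∑ ω, p ω * X ω

/-- Conditional expectation `E[X | E]`. -/
noncomputable def CEx {Ω : Type*} [Fintype Ω] (p : Ω → ℝ) (X : Ω → ℝ) (E : Ω → Prop) : ℝ :=
  (∑ ω, if E ω then p ω * X ω else 0) / Pr p E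

/-- Conditional probability `P(E | F)`. -/
noncomputable def CPr {Ω : Type*} [Fintype Ω] (p : Ω → ℝ) (E F : Ω → Prop) : ℝ :=
  Pr p (fun ω => E ω ∧ F ω) / Pr p F

/-- The event `{W = W ω₀, A = A ω₀, C = C ω₀, CY = C ω₀ * Y ω₀}`, i.e. the
conditioning event `V = V(ω₀)` with `V = (W, A, C, CY)`. -/
def Vev {Ω 𝕎 : Type*} (W : Ω → 𝕎) (A C Y : Ω → Bool) (ω₀ ω : Ω) : Prop :=
  W ω = W ω₀ ∧ A ω = A ω₀ ∧ C ω = C ω₀ ∧ (C ω && Y ω) = (C ω₀ && Y ω₀)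

/-!
On the support of the outer conditioning event, each inner conditioning event `V = V(ω₀)` has
positive probability and fixes `W`, so both inner means are means of a function of `S` alone.
Conditional independence of `R` and `S` given `V` says that conditioning further on `R = 1`
leaves the conditional law of `S` unchanged, `P(S = s | R = 1, V) = P(S = s | V)`, provided
`P(R = 1 | V) > 0`; hence the inner means agree pointwise and so do the outer ones.
-/

section FiniteProbability

variable {Ω : Type*} [Fintype Ω] (p : Ω → ℝ)

lemma Pr_congr {E F : Ω → Prop} (h : ∀ ω, E ω ↔ F ω) : Pr p E = Pr p F :=
  Finset.sum_congr rfl fun ω _ => if_congr (h ω) rfl rfl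

lemma Pr_pos_of_mem (hp : ∀ ω, 0 ≤ p ω) {E : Ω → Prop} {ω₀ : Ω} (hE : E ω₀)
    (hω₀ : 0 < p ω₀) : 0 < Pr p E := by
  refine hω₀.trans_le ?_
  have := Finset.single_le_sum (f := fun ω => if E ω then p ω else 0)
    (fun ω _ => by split_ifs <;> simp [hp ω]) (Finset.mem_univ ω₀)
  simpa [Pr, hE] using this

lemma Pr_ne_zero_of_CPr_ne_zero {E F : Ω → Prop} (h : CPr p E F ≠ 0) : Pr p F ≠ 0 := by
  rintro hF
  simp [CPr, hF] at h

lemma CEx_congr {X X' : Ω → ℝ} {E : Ω → Prop} (h : ∀ ω, E ω → p ω ≠ 0 → X ω = X' ω) :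
    CEx p X E = CEx p X' E := by
  unfold CEx
  congr 1
  refine Finset.sum_congr rfl fun ω _ => ?_
  by_cases hE : E ω
  · by_cases hω : p ω = 0
    · simp [hE, hω]
    · simp [hE, h ω hE hω]
  · simp [hE]

lemma CEx_comp_eq_sum_CPr {𝕊 : Type*} (S : Ω → 𝕊) (g : 𝕊 → ℝ) (E : Ω → Prop) :
    CEx p (fun ω => g (S ω)) E
      = ∑ s ∈ Finset.univ.image S, g s * CPr p (fun ω => S ω = s) E := by
  have hsplit : (∑ ω, if E ω then p ω * g (S ω) else 0)
      = ∑ s ∈ Finset.univ.image S, g s * Pr p (fun ω => S ω = s ∧ E ω) := by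
    simp_rw [Pr, Finset.mul_sum, mul_ite, mul_zero]
    rw [Finset.sum_comm]
    refine Finset.sum_congr rfl fun ω _ => ?_
    by_cases hE : E ω
    · rw [Finset.sum_eq_single_of_mem (S ω) (Finset.mem_image_of_mem S (Finset.mem_univ ω))
        fun s _ hs => if_neg fun h => hs h.1.symm]
      simp [hE, mul_comm]
    · simp [hE]
  simp only [CEx, CPr, hsplit, Finset.sum_div, mul_div_assoc]

lemma CPr_cond_and (E B F : Ω → Prop) (hF : Pr p F ≠ 0) :
    CPr p E (fun ω => B ω ∧ F ω) = CPr p (fun ω => B ω ∧ E ω) F / CPr p B F := by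
  have hassoc : Pr p (fun ω => E ω ∧ B ω ∧ F ω) = Pr p (fun ω => (B ω ∧ E ω) ∧ F ω) :=
    Pr_congr p fun ω => by tauto
  rw [CPr, CPr, CPr, hassoc, div_div_div_cancel_right₀ hF]

lemma CEx_comp_cond_and_eq_of_condIndep {𝕊 : Type*} (S : Ω → 𝕊) (g : 𝕊 → ℝ) (B F : Ω → Prop)
    (hB : CPr p B F ≠ 0)
    (hindep : ∀ s, CPr p (fun ω => B ω ∧ S ω = s) F = CPr p B F * CPr p (fun ω => S ω = s) F) :
    CEx p (fun ω => g (S ω)) (fun ω => B ω ∧ F ω) = CEx p (fun ω => g (S ω)) F := by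
  rw [CEx_comp_eq_sum_CPr, CEx_comp_eq_sum_CPr]
  refine Finset.sum_congr rfl fun s _ => ?_
  rw [CPr_cond_and p _ B F (Pr_ne_zero_of_CPr_ne_zero p hB), hindep, mul_div_cancel_left₀ _ hB]

end FiniteProbability

theorem nested_condexp_tower_general {Ω 𝕎 𝕊 : Type*} [Fintype Ω]
    (p : Ω → ℝ) (hp : ∀ ω, 0 ≤ p ω)
    (W : Ω → 𝕎) (S : Ω → 𝕊) (A C Y R : Ω → Bool)
    (hCI : ∀ ω₀, Pr p (Vev W A C Y ω₀) > 0 → ∀ (r : Bool) (s : 𝕊),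
      CPr p (fun ω => R ω = r ∧ S ω = s) (Vev W A C Y ω₀)
        = CPr p (fun ω => R ω = r) (Vev W A C Y ω₀)
          * CPr p (fun ω => S ω = s) (Vev W A C Y ω₀))
    (hRpos : ∀ ω₀, Pr p (Vev W A C Y ω₀) > 0 →
      CPr p (fun ω => R ω = true) (Vev W A C Y ω₀) > 0)
    (f : 𝕎 → 𝕊 → ℝ) (a₂ : Bool) :
    ∀ w : 𝕎, Pr p (fun ω => A ω = a₂ ∧ W ω = w) > 0 →
      CEx p (fun ω₀ => CEx p (fun ω => f (W ω) (S ω)) (Vev W A C Y ω₀))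
          (fun ω => A ω = a₂ ∧ W ω = w)
        = CEx p (fun ω₀ => CEx p (fun ω => f (W ω) (S ω))
              (fun ω => R ω = true ∧ Vev W A C Y ω₀ ω))
            (fun ω => A ω = a₂ ∧ W ω = w) := by
  intro w _
  refine CEx_congr p fun ω₀ _ hω₀ => ?_
  have hV : 0 < Pr p (Vev W A C Y ω₀) :=
    Pr_pos_of_mem p hp ⟨rfl, rfl, rfl, rfl⟩ ((hp ω₀).lt_of_ne' hω₀)
  have hfreeze : ∀ B : Ω → Prop, (∀ ω, B ω → Vev W A C Y ω₀ ω) →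
      CEx p (fun ω => f (W ω) (S ω)) B = CEx p (fun ω => f (W ω₀) (S ω)) B :=
    fun B hB => CEx_congr p fun ω hω _ => by rw [(hB ω hω).1]
  rw [hfreeze _ fun _ => id, hfreeze _ fun _ => And.right]
  exact (CEx_comp_cond_and_eq_of_condIndep p S (f (W ω₀)) _ _ (hRpos ω₀ hV).ne'
    (hCI ω₀ hV true)).symm

/-- Lemma 1, discrete case: if `R ⟂ S | (W, A, C, CY)` and
`P(R = 1 | W, A, C, CY) > 0` on attained values, then for any function `f(W,S)`,
`E[ E[f(W,S) | W,A,C,CY] | A = a₂, W = w ] = E[ E[f(W,S) | R = 1, W,A,C,CY] | A = a₂, W = w ]`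
for every `w` with `P(A = a₂, W = w) > 0`.  In particular, taking
`f(W,S) = E[Y | A = a₁, W, S]`, the nested regression `Q̄_{Q̄_Y(W,S)}(w)` equals
`Q̃_{Q̃(W,A,C,CY)}(w)`. -/
theorem nested_condexp_tower {Ω 𝕎 𝕊 : Type*} [Fintype Ω]
    (p : Ω → ℝ) (hp : ∀ ω, 0 ≤ p ω) (hp1 : ∑ ω, p ω = 1)
    (W : Ω → 𝕎) (S : Ω → 𝕊) (A C Y R : Ω → Bool)
    (hCI : ∀ ω₀, Pr p (Vev W A C Y ω₀) > 0 → ∀ (r : Bool) (s : 𝕊),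
      CPr p (fun ω => R ω = r ∧ S ω = s) (Vev W A C Y ω₀)
        = CPr p (fun ω => R ω = r) (Vev W A C Y ω₀)
          * CPr p (fun ω => S ω = s) (Vev W A C Y ω₀))
    (hRpos : ∀ ω₀, Pr p (Vev W A C Y ω₀) > 0 →
      CPr p (fun ω => R ω = true) (Vev W A C Y ω₀) > 0)
    (f : 𝕎 → 𝕊 → ℝ) (a₂ : Bool) :
    ∀ w : 𝕎, Pr p (fun ω => A ω = a₂ ∧ W ω = w) > 0 →
      CEx p (fun ω₀ => CEx p (fun ω => f (W ω) (S ω)) (Vev W A C Y ω₀))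
          (fun ω => A ω = a₂ ∧ W ω = w)
        = CEx p (fun ω₀ => CEx p (fun ω => f (W ω) (S ω))
              (fun ω => R ω = true ∧ Vev W A C Y ω₀ ω))
            (fun ω => A ω = a₂ ∧ W ω = w) :=
  nested_condexp_tower_general p hp W S A C Y R hCI hRpos f a₂
end

section
/- The full-data efficient influence function has mean zero: E_X[D(P_X)(X)] = 0, where D(P_X)(x) = [1(a = a₁, c = 1) / (g_{A|W}(a₂|w) g_C(1|a₁,w))] · [g_{A|W,S}(a₂|w,s)/g_{A|W,S}(a₁|w,s)] · (y − Q̄_Y(w,s)) + [1(a = a₂)/g_{A|W}(a₂|w)] · (Q̄_Y(w,s) − Q̄_{Q̄_Y}(w)) + Q̄_{Q̄_Y}(w) − ψ(a₁,a₂), with all nuisance functions equal to their true values under P_X. -/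
open scoped Classical BigOperators

section Nuisance

variable {Ω 𝕎 𝕊 : Type*} [Fintype Ω]

/-- `g_{A|W}(a|w) = P(A = a | W = w)`. -/
noncomputable def gA (p : Ω → ℝ) (W : Ω → 𝕎) (A : Ω → Bool) (a : Bool) (w : 𝕎) : ℝ :=
  CPr p (fun ω => A ω = a) (fun ω => W ω = w)

/-- `g_C(1|a,w) = P(C = 1 | A = a, W = w)`. -/
noncomputable def gC (p : Ω → ℝ) (W : Ω → 𝕎) (A C : Ω → Bool) (a : Bool) (w : 𝕎) : ℝ :=
  CPr p (fun ω => C ω = true) (fun ω => A ω = a ∧ W ω = w)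

/-- `g_{A|W,S}(a|w,s) = P(A = a | W = w, S = s)`. -/
noncomputable def gAS (p : Ω → ℝ) (W : Ω → 𝕎) (S : Ω → 𝕊) (A : Ω → Bool)
    (a : Bool) (w : 𝕎) (s : 𝕊) : ℝ :=
  CPr p (fun ω => A ω = a) (fun ω => W ω = w ∧ S ω = s)

/-- `Q̄_Y(w,s) = E[Y | A = a₁, C = 1, W = w, S = s]`. -/
noncomputable def QbarY (p : Ω → ℝ) (W : Ω → 𝕎) (S : Ω → 𝕊) (A C Y : Ω → Bool)
    (a₁ : Bool) (w : 𝕎) (s : 𝕊) : ℝ :=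
  CEx p (fun ω => if Y ω then 1 else 0)
    (fun ω => A ω = a₁ ∧ C ω = true ∧ W ω = w ∧ S ω = s)

/-- `Q̄_{Q̄_Y}(w) = E[Q̄_Y(w, S) | A = a₂, W = w]`. -/
noncomputable def QbarQ (p : Ω → ℝ) (W : Ω → 𝕎) (S : Ω → 𝕊) (A C Y : Ω → Bool)
    (a₁ a₂ : Bool) (w : 𝕎) : ℝ :=
  CEx p (fun ω => QbarY p W S A C Y a₁ w (S ω)) (fun ω => A ω = a₂ ∧ W ω = w)

/-- `ψ(a₁,a₂) = E[Q̄_{Q̄_Y}(W)]`. -/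
noncomputable def ψmed (p : Ω → ℝ) (W : Ω → 𝕎) (S : Ω → 𝕊) (A C Y : Ω → Bool)
    (a₁ a₂ : Bool) : ℝ :=
  Ex p (fun ω => QbarQ p W S A C Y a₁ a₂ (W ω))

/-- The full-data efficient influence function `D(P_X)` evaluated at `ω`. -/
noncomputable def Dfull (p : Ω → ℝ) (W : Ω → 𝕎) (S : Ω → 𝕊) (A C Y : Ω → Bool)
    (a₁ a₂ : Bool) (ω : Ω) : ℝ :=
  (if A ω = a₁ ∧ C ω = true then 1 else 0)
      / (gA p W A a₂ (W ω) * gC p W A C a₁ (W ω))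
      * (gAS p W S A a₂ (W ω) (S ω) / gAS p W S A a₁ (W ω) (S ω))
      * ((if Y ω then 1 else 0) - QbarY p W S A C Y a₁ (W ω) (S ω))
    + (if A ω = a₂ then 1 else 0) / gA p W A a₂ (W ω)
      * (QbarY p W S A C Y a₁ (W ω) (S ω) - QbarQ p W S A C Y a₁ a₂ (W ω))
    + QbarQ p W S A C Y a₁ a₂ (W ω) - ψmed p W S A C Y a₁ a₂

end Nuisance

/-- Centered conditional sum vanishes: `∑_{ω ∈ E} p ω (X ω - E[X|E]) = 0`. -/
lemma sum_centered_zero {Ω : Type*} [Fintype Ω] (p : Ω → ℝ) (hp : ∀ ω, 0 ≤ p ω)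
    (X : Ω → ℝ) (E : Ω → Prop) [DecidablePred E] :
    ∑ ω, (if E ω then p ω * (X ω - CEx p X E) else 0) = 0 := by
  have expand : ∑ ω, (if E ω then p ω * (X ω - CEx p X E) else 0)
      = (∑ ω, if E ω then p ω * X ω else 0) - CEx p X E * Pr p E := by
    unfold Pr
    rw [Finset.mul_sum, ← Finset.sum_sub_distrib]
    apply Finset.sum_congr rfl; intro ω _
    by_cases h : E ω <;> simp [h] <;> ring
  rw [expand]
  by_cases h : Pr p E = 0
  · have hPr : (∑ ω, if E ω then p ω else 0) = 0 := by
      have e : Pr p E = ∑ ω, if E ω then p ω else 0 := by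
        unfold Pr
        exact Finset.sum_congr rfl fun ω _ => by by_cases hE : E ω <;> simp [hE]
      rw [← e]; exact h
    have hall : ∀ ω ∈ Finset.univ, (if E ω then p ω else 0) = 0 :=
      (Finset.sum_eq_zero_iff_of_nonneg
        (fun ω _ => by by_cases hE : E ω <;> simp [hE, hp ω])).mp hPr
    have hz : (∑ ω, if E ω then p ω * X ω else 0) = 0 := by
      apply Finset.sum_eq_zero; intro ω _
      by_cases hE : E ω
      · have := hall ω (Finset.mem_univ ω)
        rw [if_pos hE] at this
        rw [if_pos hE, this, zero_mul]
      · rw [if_neg hE]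
    rw [hz, h, mul_zero, sub_zero]
  · unfold CEx
    rw [div_mul_cancel₀ _ h, sub_eq_zero]
    exact Finset.sum_congr rfl fun ω _ => by by_cases hE : E ω <;> simp [hE]


/-- the full-data efficient influence function has mean zero,
`E_X[D(P_X)(X)] = 0`, under positivity and `C ⟂ S | (A, W)`. -/
theorem full_data_eif_mean_zero {Ω 𝕎 𝕊 : Type*} [Fintype Ω]
    (p : Ω → ℝ) (hp : ∀ ω, 0 ≤ p ω) (hp1 : ∑ ω, p ω = 1)
    (W : Ω → 𝕎) (S : Ω → 𝕊) (A C Y : Ω → Bool) (a₁ a₂ : Bool)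
    -- positivity of conditioning events on attained values
    (hWS : ∀ ω, p ω > 0 →
      Pr p (fun ω' => A ω' = a₁ ∧ C ω' = true ∧ W ω' = W ω ∧ S ω' = S ω) > 0)
    (hAW : ∀ ω, p ω > 0 → ∀ a : Bool, Pr p (fun ω' => A ω' = a ∧ W ω' = W ω) > 0)
    -- positivity of nuisance probabilities on attained values
    (hgA : ∀ ω, p ω > 0 → ∀ a : Bool, 0 < gA p W A a (W ω) ∧ gA p W A a (W ω) < 1)
    (hgC : ∀ ω, p ω > 0 → 0 < gC p W A C a₁ (W ω) ∧ gC p W A C a₁ (W ω) < 1)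
    (hgAS : ∀ ω, p ω > 0 → ∀ a : Bool,
      0 < gAS p W S A a (W ω) (S ω) ∧ gAS p W S A a (W ω) (S ω) < 1)
    -- conditional independence C ⟂ S | (A, W): g_C does not depend on S
    (hCS : ∀ ω, p ω > 0 →
      CPr p (fun ω' => C ω' = true)
          (fun ω' => A ω' = a₁ ∧ W ω' = W ω ∧ S ω' = S ω)
        = gC p W A C a₁ (W ω)) :
    Ex p (Dfull p W S A C Y a₁ a₂) = 0 := by
  classical
  -- notation
  set ψ := ψmed p W S A C Y a₁ a₂ with hψ
  unfold Ex
  -- term 1 has mean zero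
  have h1 : (∑ ω, p ω *
      ((if A ω = a₁ ∧ C ω = true then 1 else 0)
        / (gA p W A a₂ (W ω) * gC p W A C a₁ (W ω))
        * (gAS p W S A a₂ (W ω) (S ω) / gAS p W S A a₁ (W ω) (S ω))
        * ((if Y ω then 1 else 0) - QbarY p W S A C Y a₁ (W ω) (S ω)))) = 0 := by
    have hfib := Finset.sum_fiberwise_of_maps_to
      (s := (Finset.univ : Finset Ω))
      (t := Finset.univ.image fun ω => (W ω, S ω)) (g := fun ω => (W ω, S ω))
      (fun ω _ => Finset.mem_image_of_mem _ (Finset.mem_univ ω))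
      (fun ω => p ω *
        ((if A ω = a₁ ∧ C ω = true then 1 else 0)
          / (gA p W A a₂ (W ω) * gC p W A C a₁ (W ω))
          * (gAS p W S A a₂ (W ω) (S ω) / gAS p W S A a₁ (W ω) (S ω))
          * ((if Y ω then 1 else 0) - QbarY p W S A C Y a₁ (W ω) (S ω))))
    rw [← hfib]
    apply Finset.sum_eq_zero
    rintro ⟨w, s⟩ hv
    rw [Finset.sum_filter]
    have key : ∀ ω, (if (fun ω => (W ω, S ω)) ω = (w, s) then p ω *
        ((if A ω = a₁ ∧ C ω = true then 1 else 0)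
          / (gA p W A a₂ (W ω) * gC p W A C a₁ (W ω))
          * (gAS p W S A a₂ (W ω) (S ω) / gAS p W S A a₁ (W ω) (S ω))
          * ((if Y ω then 1 else 0) - QbarY p W S A C Y a₁ (W ω) (S ω))) else 0)
        = (gAS p W S A a₂ w s / gAS p W S A a₁ w s)
            / (gA p W A a₂ w * gC p W A C a₁ w) *
          (if (A ω = a₁ ∧ C ω = true ∧ W ω = w ∧ S ω = s)
            then p ω * ((if Y ω then 1 else 0) -
              CEx p (fun ω => if Y ω then 1 else 0)
                (fun ω => A ω = a₁ ∧ C ω = true ∧ W ω = w ∧ S ω = s))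
            else 0) := by
      intro ω
      by_cases hk : (W ω, S ω) = (w, s)
      · have hw : W ω = w := congrArg Prod.fst hk
        have hs : S ω = s := congrArg Prod.snd hk
        by_cases hE : A ω = a₁ ∧ C ω = true
        · have hE4 : A ω = a₁ ∧ C ω = true ∧ W ω = w ∧ S ω = s := ⟨hE.1, hE.2, hw, hs⟩
          rw [if_pos hk, if_pos hE, if_pos hE4, hw, hs]
          unfold QbarY
          ring
        · have hE4 : ¬(A ω = a₁ ∧ C ω = true ∧ W ω = w ∧ S ω = s) :=
            fun h => hE ⟨h.1, h.2.1⟩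
          rw [if_pos hk, if_neg hE, if_neg hE4]
          ring
      · have hE4 : ¬(A ω = a₁ ∧ C ω = true ∧ W ω = w ∧ S ω = s) :=
          fun h => hk (by rw [h.2.2.1, h.2.2.2])
        rw [if_neg hk, if_neg hE4]
        ring
    rw [Finset.sum_congr rfl (fun ω _ => key ω), ← Finset.mul_sum]
    exact mul_eq_zero_of_right _ (sum_centered_zero p hp _ _)
  -- term 2 has mean zero
  have h2 : (∑ ω, p ω *
      ((if A ω = a₂ then 1 else 0) / gA p W A a₂ (W ω)
        * (QbarY p W S A C Y a₁ (W ω) (S ω) - QbarQ p W S A C Y a₁ a₂ (W ω)))) = 0 := by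
    have hfib := Finset.sum_fiberwise_of_maps_to
      (s := (Finset.univ : Finset Ω))
      (t := Finset.univ.image W) (g := W)
      (fun ω _ => Finset.mem_image_of_mem _ (Finset.mem_univ ω))
      (fun ω => p ω *
        ((if A ω = a₂ then 1 else 0) / gA p W A a₂ (W ω)
          * (QbarY p W S A C Y a₁ (W ω) (S ω) - QbarQ p W S A C Y a₁ a₂ (W ω))))
    rw [← hfib]
    apply Finset.sum_eq_zero
    intro w hv
    rw [Finset.sum_filter]
    have key : ∀ ω, (if W ω = w then p ω *
        ((if A ω = a₂ then 1 else 0) / gA p W A a₂ (W ω)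
          * (QbarY p W S A C Y a₁ (W ω) (S ω) - QbarQ p W S A C Y a₁ a₂ (W ω))) else 0)
        = (1 / gA p W A a₂ w) *
          (if (A ω = a₂ ∧ W ω = w)
            then p ω * (QbarY p W S A C Y a₁ w (S ω) -
              CEx p (fun ω => QbarY p W S A C Y a₁ w (S ω))
                (fun ω => A ω = a₂ ∧ W ω = w))
            else 0) := by
      intro ω
      by_cases hw : W ω = w
      · by_cases hE : A ω = a₂
        · have hE2 : A ω = a₂ ∧ W ω = w := ⟨hE, hw⟩
          rw [if_pos hw, if_pos hE, if_pos hE2, hw]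
          unfold QbarQ
          ring
        · have hE2 : ¬(A ω = a₂ ∧ W ω = w) := fun h => hE h.1
          rw [if_pos hw, if_neg hE, if_neg hE2]
          ring
      · have hE2 : ¬(A ω = a₂ ∧ W ω = w) := fun h => hw h.2
        rw [if_neg hw, if_neg hE2]
        ring
    rw [Finset.sum_congr rfl (fun ω _ => key ω), ← Finset.mul_sum]
    exact mul_eq_zero_of_right _ (sum_centered_zero p hp _ _)
  -- term 3 has mean zero
  have h3 : (∑ ω, p ω * (QbarQ p W S A C Y a₁ a₂ (W ω) - ψ)) = 0 := by
    have step : ∀ ω, p ω * (QbarQ p W S A C Y a₁ a₂ (W ω) - ψ)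
        = p ω * QbarQ p W S A C Y a₁ a₂ (W ω) - ψ * p ω := fun ω => by ring
    rw [Finset.sum_congr rfl (fun ω _ => step ω), Finset.sum_sub_distrib,
      ← Finset.mul_sum, hp1, mul_one, hψ]
    show Ex p (fun ω => QbarQ p W S A C Y a₁ a₂ (W ω)) - ψmed p W S A C Y a₁ a₂ = 0
    rw [ψmed, sub_self]
  calc ∑ ω, p ω * Dfull p W S A C Y a₁ a₂ ω
      = (∑ ω, p ω *
          ((if A ω = a₁ ∧ C ω = true then 1 else 0)
            / (gA p W A a₂ (W ω) * gC p W A C a₁ (W ω))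
            * (gAS p W S A a₂ (W ω) (S ω) / gAS p W S A a₁ (W ω) (S ω))
            * ((if Y ω then 1 else 0) - QbarY p W S A C Y a₁ (W ω) (S ω))))
        + (∑ ω, p ω *
          ((if A ω = a₂ then 1 else 0) / gA p W A a₂ (W ω)
            * (QbarY p W S A C Y a₁ (W ω) (S ω) - QbarQ p W S A C Y a₁ a₂ (W ω))))
        + (∑ ω, p ω * (QbarQ p W S A C Y a₁ a₂ (W ω) - ψ)) := by
          rw [← Finset.sum_add_distrib, ← Finset.sum_add_distrib]
          apply Finset.sum_congr rfl
          intro ω _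
          unfold Dfull
          rw [hψ]
          ring
    _ = 0 := by rw [h1, h2, h3]; ring
end

section
/- Double robustness of the augmented IPW estimating function in the sampling mechanism: suppose R ⟂ X | V and let f(X) be bounded with E[f(X)] = ψ. Let g'(v) be any function with g'(v) > 0, and let m(v) := E[f(X) | R = 1, V = v] be the true conditional mean. Then E[ (R/g'(V)) f(X) + (1 − R/g'(V)) m(V) ] = ψ, even if g' ≠ g_R. That is, the estimating function remains unbiased if the outcome regression m is correct but the sampling probability is misspecified. -/
open scoped Classical BigOperators

/-!
Write the estimating function as `m(V) + (R / g'(V)) (f(X) - m(V))`. Since `R / g'(V)` is a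
function of `(R, V)` and `m(V)` is the conditional mean of `f(X)` given `(R, V)` wherever `R = 1`,
the tower property kills the expectation of the correction term. Conditional
independence of `X` and `R` given `V` identifies `m(V)` with `E[f(X) | V]`, whose expectation is
`E[f(X)] = ψ` by the tower property again.
-/

open Finset

section FiniteProbability

variable {Ω : Type*} [Fintype Ω] {p : Ω → ℝ}

theorem le_Pr (hp : ∀ ω, 0 ≤ p ω) {E : Ω → Prop} {ω : Ω} (hω : E ω) : p ω ≤ Pr p E := by
  calc p ω = if E ω then p ω else 0 := (if_pos hω).symm
    _ ≤ Pr p E := single_le_sum (f := fun ω => if E ω then p ω else 0)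
        (fun ω _ => by split_ifs <;> simp [hp]) (mem_univ ω)

theorem sum_ite_mul_eq_CEx_mul_Pr (hp : ∀ ω, 0 ≤ p ω) (Y : Ω → ℝ) (E : Ω → Prop) :
    (∑ ω, if E ω then p ω * Y ω else 0) = CEx p Y E * Pr p E := by
  by_cases hE : Pr p E = 0
  · rw [hE, mul_zero]
    refine sum_eq_zero fun ω _ => ?_
    split_ifs with hω
    · rw [le_antisymm (hE ▸ le_Pr hp hω) (hp ω), zero_mul]
    · rfl
  · rw [CEx, div_mul_cancel₀ _ hE]

theorem Ex_mul_CEx_eq {σ : Type*} (hp : ∀ ω, 0 ≤ p ω) (S : Ω → σ) (h : σ → ℝ) (Y : Ω → ℝ) :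
    Ex p (fun ω => h (S ω) * CEx p Y (fun ω' => S ω' = S ω)) = Ex p (fun ω => h (S ω) * Y ω) := by
  have hS : ∀ ω ∈ (univ : Finset Ω), S ω ∈ univ.image S :=
    fun ω _ => mem_image_of_mem S (mem_univ ω)
  unfold Ex
  rw [← sum_fiberwise_of_maps_to hS, ← sum_fiberwise_of_maps_to hS]
  refine sum_congr rfl fun s _ => ?_
  calc ∑ ω with S ω = s, p ω * (h (S ω) * CEx p Y (fun ω' => S ω' = S ω))
      = h s * (CEx p Y (fun ω => S ω = s) * Pr p (fun ω => S ω = s)) := by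
        rw [Pr, ← sum_filter, mul_sum, mul_sum]
        refine sum_congr rfl fun ω hω => ?_
        rw [(mem_filter.1 hω).2]
        ring
    _ = ∑ ω with S ω = s, p ω * (h (S ω) * Y ω) := by
        rw [← sum_ite_mul_eq_CEx_mul_Pr hp, ← sum_filter, mul_sum]
        refine sum_congr rfl fun ω hω => ?_
        rw [(mem_filter.1 hω).2]
        ring

theorem sum_ite_mul_comp_eq_sum_image {α : Type*} (X : Ω → α) (f : α → ℝ) (E : Ω → Prop) :
    (∑ ω, if E ω then p ω * f (X ω) else 0)
      = ∑ x ∈ univ.image X, f x * Pr p (fun ω => X ω = x ∧ E ω) := by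
  rw [← sum_filter, ← sum_fiberwise_of_maps_to (t := univ.image X) (g := X)
    (fun ω _ => mem_image_of_mem X (mem_univ ω))]
  refine sum_congr rfl fun x _ => ?_
  rw [Pr, mul_sum, filter_filter, sum_filter]
  refine sum_congr rfl fun ω _ => ?_
  by_cases hx : X ω = x
  · simp only [hx, true_and, and_true, mul_ite, mul_zero]
    exact if_congr Iff.rfl (mul_comm _ _) rfl
  · simp [hx]

theorem CEx_and_eq_CEx_of_condIndep {α : Type*} (X : Ω → α) (f : α → ℝ) {E F : Ω → Prop}
    (hF : Pr p F ≠ 0) (hEF : CPr p E F ≠ 0)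
    (hind : ∀ x, CPr p (fun ω => X ω = x ∧ E ω) F = CPr p (fun ω => X ω = x) F * CPr p E F) :
    CEx p (fun ω => f (X ω)) (fun ω => E ω ∧ F ω) = CEx p (fun ω => f (X ω)) F := by
  have hB : Pr p (fun ω => E ω ∧ F ω) ≠ 0 := fun h => hEF (by rw [CPr, h, zero_div])
  have hjoint : ∀ x, Pr p (fun ω => X ω = x ∧ E ω ∧ F ω)
      = Pr p (fun ω => X ω = x ∧ F ω) * Pr p (fun ω => E ω ∧ F ω) / Pr p F := by
    intro x
    have h := hind x
    simp only [CPr, and_assoc] at h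
    field_simp at h
    field_simp
    linear_combination h
  unfold CEx
  rw [sum_ite_mul_comp_eq_sum_image, sum_ite_mul_comp_eq_sum_image, div_eq_div_iff hB hF, sum_mul,
    sum_mul]
  refine sum_congr rfl fun x _ => ?_
  rw [hjoint]
  field_simp

end FiniteProbability

theorem double_robustness_sampling_misspecified_general {Ω 𝕏 𝕍 : Type*} [Fintype Ω]
    (p : Ω → ℝ) (hp : ∀ ω, 0 ≤ p ω)
    (X : Ω → 𝕏) (V : Ω → 𝕍) (R : Ω → Bool)
    (hCI : ∀ v : 𝕍, Pr p (fun ω => V ω = v) > 0 → ∀ (x : 𝕏) (r : Bool),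
      CPr p (fun ω => X ω = x ∧ R ω = r) (fun ω => V ω = v)
        = CPr p (fun ω => X ω = x) (fun ω => V ω = v)
          * CPr p (fun ω => R ω = r) (fun ω => V ω = v))
    (hRpos : ∀ v : 𝕍, Pr p (fun ω => V ω = v) > 0 →
      CPr p (fun ω => R ω = true) (fun ω => V ω = v) > 0)
    (g' : 𝕍 → ℝ)
    (f : 𝕏 → ℝ) (ψ : ℝ) (hf : Ex p (fun ω => f (X ω)) = ψ) :
    Ex p (fun ω =>
        (if R ω then 1 else 0) / g' (V ω) * f (X ω)
          + (1 - (if R ω then 1 else 0) / g' (V ω))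
            * CEx p (fun ω' => f (X ω')) (fun ω' => R ω' = true ∧ V ω' = V ω))
      = ψ := by
  set m : 𝕍 → ℝ := fun v => CEx p (fun ω => f (X ω)) (fun ω => R ω = true ∧ V ω = v)
  set w : Bool × 𝕍 → ℝ := fun s => (if s.1 then 1 else 0) / g' s.2
  have hm : ∀ ω, p ω * m (V ω) = p ω * CEx p (fun ω => f (X ω)) (fun ω' => V ω' = V ω) := by
    intro ω
    rcases (hp ω).eq_or_lt with h0 | hpos
    · rw [← h0, zero_mul, zero_mul]
    have hV : 0 < Pr p (fun ω' => V ω' = V ω) := hpos.trans_le (le_Pr hp rfl)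
    exact congrArg _
      (CEx_and_eq_CEx_of_condIndep X f hV.ne' (hRpos _ hV).ne' fun x => hCI _ hV x true)
  have hwm : ∀ ω, w (R ω, V ω) * m (V ω)
      = w (R ω, V ω) * CEx p (fun ω => f (X ω)) (fun ω' => (R ω', V ω') = (R ω, V ω)) := by
    intro ω
    cases hR : R ω
    · simp [w]
    · simp only [Prod.mk.injEq, m]
  have hcorrection : Ex p (fun ω => w (R ω, V ω) * m (V ω))
      = Ex p (fun ω => w (R ω, V ω) * f (X ω)) := by
    simp only [hwm]
    exact Ex_mul_CEx_eq hp (fun ω => (R ω, V ω)) w _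
  calc _ = Ex p (fun ω => m (V ω)) + Ex p (fun ω => w (R ω, V ω) * f (X ω))
          - Ex p (fun ω => w (R ω, V ω) * m (V ω)) := by
        simp only [Ex, ← sum_add_distrib, ← sum_sub_distrib]
        exact sum_congr rfl fun ω _ => by ring
    _ = Ex p (fun ω => 1 * CEx p (fun ω => f (X ω)) (fun ω' => V ω' = V ω)) := by
        rw [hcorrection, add_sub_cancel_right]
        simp only [Ex, one_mul, hm]
    _ = ψ := by rw [Ex_mul_CEx_eq hp V (fun _ => 1)]; simp only [one_mul, hf]

/-- double robustness in the sampling mechanism. If `R ⟂ X | V`,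
`E[f(X)] = ψ`, `g'` is an arbitrary strictly positive function of `v`, and
`m(v) = E[f(X) | R = 1, V = v]` is the true conditional mean, then
`E[(R/g'(V)) f(X) + (1 − R/g'(V)) m(V)] = ψ`, even if `g' ≠ g_R`. -/
theorem double_robustness_sampling_misspecified {Ω 𝕏 𝕍 : Type*} [Fintype Ω]
    (p : Ω → ℝ) (hp : ∀ ω, 0 ≤ p ω) (hp1 : ∑ ω, p ω = 1)
    (X : Ω → 𝕏) (V : Ω → 𝕍) (R : Ω → Bool)
    (hVX : ∀ ω ω', X ω = X ω' → V ω = V ω')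
    (hCI : ∀ v : 𝕍, Pr p (fun ω => V ω = v) > 0 → ∀ (x : 𝕏) (r : Bool),
      CPr p (fun ω => X ω = x ∧ R ω = r) (fun ω => V ω = v)
        = CPr p (fun ω => X ω = x) (fun ω => V ω = v)
          * CPr p (fun ω => R ω = r) (fun ω => V ω = v))
    (hRpos : ∀ v : 𝕍, Pr p (fun ω => V ω = v) > 0 →
      CPr p (fun ω => R ω = true) (fun ω => V ω = v) > 0)
    (g' : 𝕍 → ℝ) (hg' : ∀ v, 0 < g' v)
    (f : 𝕏 → ℝ) (ψ : ℝ) (hf : Ex p (fun ω => f (X ω)) = ψ) :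
    Ex p (fun ω =>
        (if R ω then 1 else 0) / g' (V ω) * f (X ω)
          + (1 - (if R ω then 1 else 0) / g' (V ω))
            * CEx p (fun ω' => f (X ω')) (fun ω' => R ω' = true ∧ V ω' = V ω))
      = ψ :=
  double_robustness_sampling_misspecified_general p hp X V R hCI hRpos g' f ψ hf
end
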